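/- arXiv:2403.03083 — 3 statements merged into one kernel-verified Lean document; each statement's English description precedes it below -/
import Mathlib

section
/- If i ↝_{L'} i' (pruning of interaction i w.r.t. lifelines L' yields i'), then ρ(i') equals exactly the set of traces t in ρ(i) such that for all lifelines l ∈ L', t contains no action on l. -/
/-- Conflict predicate: trace `t` contains an action occurring on lifeline `l`. -/
def conflict {A L : Type} (theta : A → L) : List A → L → Prop
  | [], _ => False
  | a :: t, l => theta a = l ∨ conflict theta t l

/-- Conditional conflict predicate: trace `t` contains an action on lifeline `l` with `l ∉ r`. -/
def condConflict {A L : Type} (theta : A → L) (r : Set L) : List A → L → Prop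
  | [], _ => False
  | a :: t, l => (theta a = l ∧ l ∉ r) ∨ condConflict theta r t l

/-- Conditional sequencing: `CondSeq theta r t1 t2 t` means `t ∈ t1 ⫽_r t2`. -/
inductive CondSeq {A L : Type} (theta : A → L) (r : Set L) :
    List A → List A → List A → Prop
  | nil_left (t2 : List A) : CondSeq theta r [] t2 t2
  | nil_right (t1 : List A) : CondSeq theta r t1 [] t1
  | left {a1 a2 : A} {t1 t2 t : List A} :
      CondSeq theta r t1 (a2 :: t2) t →
      CondSeq theta r (a1 :: t1) (a2 :: t2) (a1 :: t)
  | right {a1 a2 : A} {t1 t2 t : List A} :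
      CondSeq theta r (a1 :: t1) t2 t →
      ¬ condConflict theta r (a1 :: t1) (theta a2) →
      CondSeq theta r (a1 :: t1) (a2 :: t2) (a2 :: t)

/-- Interaction terms. -/
inductive Interaction (A L : Type) where
  | empty : Interaction A L
  | act : A → Interaction A L
  | alt : Interaction A L → Interaction A L → Interaction A L
  | strict : Interaction A L → Interaction A L → Interaction A L
  | coreg : Set L → Interaction A L → Interaction A L → Interaction A L
  | loopS : Interaction A L → Interaction A L
  | loopC : Set L → Interaction A L → Interaction A L

/-- Concatenation (strict sequencing) of sets of traces. -/
def concatSet {A : Type} (S1 S2 : Set (List A)) : Set (List A) :=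
  {t | ∃ u ∈ S1, ∃ v ∈ S2, t = u ++ v}

/-- Conditional sequencing of sets of traces. -/
def condSeqSet {A L : Type} (theta : A → L) (r : Set L) (S1 S2 : Set (List A)) :
    Set (List A) :=
  {t | ∃ u ∈ S1, ∃ v ∈ S2, CondSeq theta r u v t}

/-- `j`-th power of a trace set under a binary scheduling operator. -/
def powOp {A : Type} (op : Set (List A) → Set (List A) → Set (List A))
    (S : Set (List A)) : ℕ → Set (List A)
  | 0 => {([] : List A)}
  | n + 1 => op S (powOp op S n)

/-- Kleene closure of a trace set under a binary scheduling operator. -/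
def kleene {A : Type} (op : Set (List A) → Set (List A) → Set (List A))
    (S : Set (List A)) : Set (List A) :=
  ⋃ n : ℕ, powOp op S n

/-- Denotational semantics of interactions (sets of global traces). -/
def rho {A L : Type} (theta : A → L) : Interaction A L → Set (List A)
  | .empty => {([] : List A)}
  | .act a => {[a]}
  | .alt i1 i2 => rho theta i1 ∪ rho theta i2
  | .strict i1 i2 => concatSet (rho theta i1) (rho theta i2)
  | .coreg r i1 i2 => condSeqSet theta r (rho theta i1) (rho theta i2)
  | .loopS i1 => kleene concatSet (rho theta i1)
  | .loopC r i1 => kleene (condSeqSet theta r) (rho theta i1)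

/-- `CannotPrune theta L' i` : all behaviors of `i` involve an action on a lifeline of `L'`. -/
inductive CannotPrune {A L : Type} (theta : A → L) (L' : Set L) : Interaction A L → Prop
  | act {a : A} : theta a ∈ L' → CannotPrune theta L' (.act a)
  | alt {i1 i2 : Interaction A L} :
      CannotPrune theta L' i1 → CannotPrune theta L' i2 → CannotPrune theta L' (.alt i1 i2)
  | strict_left {i1 i2 : Interaction A L} :
      CannotPrune theta L' i1 → CannotPrune theta L' (.strict i1 i2)
  | strict_right {i1 i2 : Interaction A L} :
      CannotPrune theta L' i2 → CannotPrune theta L' (.strict i1 i2)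
  | coreg_left {r : Set L} {i1 i2 : Interaction A L} :
      CannotPrune theta L' i1 → CannotPrune theta L' (.coreg r i1 i2)
  | coreg_right {r : Set L} {i1 i2 : Interaction A L} :
      CannotPrune theta L' i2 → CannotPrune theta L' (.coreg r i1 i2)

/-- Pruning relation: `Prunes theta L' i i'` means `i ↝_{L'} i'`. -/
inductive Prunes {A L : Type} (theta : A → L) (L' : Set L) :
    Interaction A L → Interaction A L → Prop
  | empty : Prunes theta L' .empty .empty
  | act {a : A} : theta a ∉ L' → Prunes theta L' (.act a) (.act a)
  | alt_both {i1 i2 i1' i2' : Interaction A L} :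
      Prunes theta L' i1 i1' → Prunes theta L' i2 i2' →
      Prunes theta L' (.alt i1 i2) (.alt i1' i2')
  | alt_left {i1 i2 i1' : Interaction A L} :
      Prunes theta L' i1 i1' → CannotPrune theta L' i2 →
      Prunes theta L' (.alt i1 i2) i1'
  | alt_right {i1 i2 i2' : Interaction A L} :
      Prunes theta L' i2 i2' → CannotPrune theta L' i1 →
      Prunes theta L' (.alt i1 i2) i2'
  | strict {i1 i2 i1' i2' : Interaction A L} :
      Prunes theta L' i1 i1' → Prunes theta L' i2 i2' →
      Prunes theta L' (.strict i1 i2) (.strict i1' i2')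
  | coreg {r : Set L} {i1 i2 i1' i2' : Interaction A L} :
      Prunes theta L' i1 i1' → Prunes theta L' i2 i2' →
      Prunes theta L' (.coreg r i1 i2) (.coreg r i1' i2')
  | loopS {i1 i1' : Interaction A L} :
      Prunes theta L' i1 i1' → Prunes theta L' (.loopS i1) (.loopS i1')
  | loopS_elim {i1 : Interaction A L} :
      CannotPrune theta L' i1 → Prunes theta L' (.loopS i1) .empty
  | loopC {r : Set L} {i1 i1' : Interaction A L} :
      Prunes theta L' i1 i1' → Prunes theta L' (.loopC r i1) (.loopC r i1')
  | loopC_elim {r : Set L} {i1 : Interaction A L} :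
      CannotPrune theta L' i1 → Prunes theta L' (.loopC r i1) .empty

/-!
Avoiding the lifelines of `L'` means that no action of the trace lies on `L'`. This property
of a trace is preserved and reflected by both concatenation and conditional interleaving, since
both only rearrange the actions of their operands. Hence filtering by it commutes with every
operator of the semantics, including the Kleene closures, and the pruning rules that keep a
subterm are sound. The rules that discard a subterm are sound because every trace of an
interaction that cannot be pruned meets `L'`, so its filtered semantics is empty.
-/

variable {A L : Type}

section TraceSets

variable {theta : A → L} {r : Set L} {P : List A → Prop} {S T : Set (List A)}

theorem CondSeq.mem_iff {u v t : List A} (h : CondSeq theta r u v t) {a : A} :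
    a ∈ t ↔ a ∈ u ∨ a ∈ v := by
  induction h with
  | nil_left => simp
  | nil_right => simp
  | left _ ih => simp only [List.mem_cons, ih]; tauto
  | right _ _ ih => simp only [List.mem_cons, ih]; tauto

@[simp]
theorem concatSet_empty_left : concatSet (∅ : Set (List A)) T = ∅ := by
  simp [concatSet]

@[simp]
theorem concatSet_empty_right : concatSet S (∅ : Set (List A)) = ∅ := by
  simp [concatSet]

@[simp]
theorem condSeqSet_empty_left : condSeqSet theta r ∅ T = ∅ := by
  simp [condSeqSet]

@[simp]
theorem condSeqSet_empty_right : condSeqSet theta r S ∅ = ∅ := by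
  simp [condSeqSet]

theorem concatSet_sep (hP : ∀ u v, P (u ++ v) ↔ P u ∧ P v) :
    concatSet {t ∈ S | P t} {t ∈ T | P t} = {t ∈ concatSet S T | P t} := by
  ext t
  simp only [concatSet, Set.mem_sep_iff]
  constructor
  · rintro ⟨u, ⟨hu, hPu⟩, v, ⟨hv, hPv⟩, rfl⟩
    exact ⟨⟨u, hu, v, hv, rfl⟩, (hP u v).2 ⟨hPu, hPv⟩⟩
  · rintro ⟨⟨u, hu, v, hv, rfl⟩, hPt⟩
    obtain ⟨hPu, hPv⟩ := (hP u v).1 hPt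
    exact ⟨u, ⟨hu, hPu⟩, v, ⟨hv, hPv⟩, rfl⟩

theorem condSeqSet_sep (hP : ∀ {u v t}, CondSeq theta r u v t → (P t ↔ P u ∧ P v)) :
    condSeqSet theta r {t ∈ S | P t} {t ∈ T | P t} = {t ∈ condSeqSet theta r S T | P t} := by
  ext t
  simp only [condSeqSet, Set.mem_sep_iff]
  constructor
  · rintro ⟨u, ⟨hu, hPu⟩, v, ⟨hv, hPv⟩, huv⟩
    exact ⟨⟨u, hu, v, hv, huv⟩, (hP huv).2 ⟨hPu, hPv⟩⟩
  · rintro ⟨⟨u, hu, v, hv, huv⟩, hPt⟩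
    obtain ⟨hPu, hPv⟩ := (hP huv).1 hPt
    exact ⟨u, ⟨hu, hPu⟩, v, ⟨hv, hPv⟩, huv⟩

variable {op : Set (List A) → Set (List A) → Set (List A)}

theorem powOp_sep (hop : ∀ S T, op {t ∈ S | P t} {t ∈ T | P t} = {t ∈ op S T | P t})
    (hnil : P []) (n : ℕ) : powOp op {t ∈ S | P t} n = {t ∈ powOp op S n | P t} := by
  induction n with
  | zero => ext t; simp +contextual [powOp, hnil]
  | succ n ih => rw [powOp, ih, hop, powOp]

theorem kleene_sep (hop : ∀ S T, op {t ∈ S | P t} {t ∈ T | P t} = {t ∈ op S T | P t})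
    (hnil : P []) : kleene op {t ∈ S | P t} = {t ∈ kleene op S | P t} := by
  ext t
  simp [kleene, powOp_sep hop hnil]

theorem kleene_empty (hop : ∀ T, op ∅ T = ∅) : kleene op ∅ = {[]} := by
  ext t
  simp only [kleene, Set.mem_iUnion, Set.mem_singleton_iff]
  constructor
  · rintro ⟨_ | n, ht⟩
    · exact ht
    · rw [powOp, hop] at ht
      exact ht.elim
  · rintro rfl
    exact ⟨0, rfl⟩

end TraceSets

section Pruning

variable {theta : A → L} {L' : Set L}

theorem conflict_iff_exists_mem {t : List A} {l : L} :
    conflict theta t l ↔ ∃ a ∈ t, theta a = l := by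
  induction t with
  | nil => simp [conflict]
  | cons a t ih => simp [conflict, ih]

theorem forall_not_conflict_iff {t : List A} :
    (∀ l ∈ L', ¬ conflict theta t l) ↔ ∀ a ∈ t, theta a ∉ L' := by
  simp only [conflict_iff_exists_mem]
  aesop

theorem concatSet_sep_avoid (S T : Set (List A)) :
    concatSet {t ∈ S | ∀ a ∈ t, theta a ∉ L'} {t ∈ T | ∀ a ∈ t, theta a ∉ L'} =
      {t ∈ concatSet S T | ∀ a ∈ t, theta a ∉ L'} :=
  concatSet_sep fun _ _ => List.forall_mem_append

theorem condSeqSet_sep_avoid (r : Set L) (S T : Set (List A)) :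
    condSeqSet theta r {t ∈ S | ∀ a ∈ t, theta a ∉ L'} {t ∈ T | ∀ a ∈ t, theta a ∉ L'} =
      {t ∈ condSeqSet theta r S T | ∀ a ∈ t, theta a ∉ L'} :=
  condSeqSet_sep fun h => by simp only [h.mem_iff, or_imp, forall_and]

theorem CannotPrune.sep_rho_eq_empty {i : Interaction A L} (h : CannotPrune theta L' i) :
    {t ∈ rho theta i | ∀ a ∈ t, theta a ∉ L'} = ∅ := by
  induction h with
  | act ha => ext t; simp +contextual [rho, ha]
  | alt _ _ ih1 ih2 => simp only [rho, Set.mem_union, Set.sep_union, ih1, ih2, Set.union_empty]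
  | strict_left _ ih => rw [rho, ← concatSet_sep_avoid, ih, concatSet_empty_left]
  | strict_right _ ih => rw [rho, ← concatSet_sep_avoid, ih, concatSet_empty_right]
  | coreg_left _ ih => rw [rho, ← condSeqSet_sep_avoid, ih, condSeqSet_empty_left]
  | coreg_right _ ih => rw [rho, ← condSeqSet_sep_avoid, ih, condSeqSet_empty_right]

theorem Prunes.rho_eq_sep {i i' : Interaction A L} (h : Prunes theta L' i i') :
    rho theta i' = {t ∈ rho theta i | ∀ a ∈ t, theta a ∉ L'} := by
  induction h with
  | empty => ext t; simp +contextual [rho]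
  | act ha => ext t; simp +contextual [rho, ha]
  | alt_both _ _ ih1 ih2 => simp only [rho, Set.mem_union, Set.sep_union, ih1, ih2]
  | alt_left _ h2 ih =>
    simp only [rho, Set.mem_union, Set.sep_union, h2.sep_rho_eq_empty, Set.union_empty, ih]
  | alt_right _ h1 ih =>
    simp only [rho, Set.mem_union, Set.sep_union, h1.sep_rho_eq_empty, Set.empty_union, ih]
  | strict _ _ ih1 ih2 => rw [rho, rho, ih1, ih2, concatSet_sep_avoid]
  | coreg _ _ ih1 ih2 => rw [rho, rho, ih1, ih2, condSeqSet_sep_avoid]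
  | loopS _ ih =>
    rw [rho, rho, ih, kleene_sep concatSet_sep_avoid (List.forall_mem_nil _)]
  | loopC _ ih =>
    rw [rho, rho, ih, kleene_sep (condSeqSet_sep_avoid _) (List.forall_mem_nil _)]
  | loopS_elim h1 =>
    rw [rho, rho, ← kleene_sep concatSet_sep_avoid (List.forall_mem_nil _), h1.sep_rho_eq_empty,
      kleene_empty fun _ => concatSet_empty_left]
  | loopC_elim h1 =>
    rw [rho, rho, ← kleene_sep (condSeqSet_sep_avoid _) (List.forall_mem_nil _),
      h1.sep_rho_eq_empty, kleene_empty fun _ => condSeqSet_empty_left]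

end Pruning

/-- Pruning characterization: the semantics of the pruned interaction is exactly the
set of traces of the original with no action on any lifeline of `L'`. -/
theorem prune_characterisation {A L : Type} (theta : A → L)
    (L' : Set L) (i i' : Interaction A L) (h : Prunes theta L' i i') :
    rho theta i' = {t ∈ rho theta i | ∀ l ∈ L', ¬ conflict theta t l} := by
  simp_rw [forall_not_conflict_iff]
  exact h.rho_eq_sep
end

section
/- Pruning does not introduce new behaviors: for any set of lifelines L', if i ↝_{L'} i' and t ∈ ρ(i'), then t ∈ ρ(i). -/
/-!
Each pruning rule either rebuilds the same operator from pruned operands, or drops one branch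
of an `alt`, or replaces a loop by `∅`. Every semantic operator is monotone in its operands, a
union contains each of its members, and the only trace of `∅` is the empty trace, which is the
zeroth iteration of any loop. Hence, by induction on the pruning derivation, `ρ(i') ⊆ ρ(i)`.
-/

section Monotonicity

variable {A L : Type}

theorem concatSet_mono {S S' T T' : Set (List A)} (hS : S ⊆ S') (hT : T ⊆ T') :
    concatSet S T ⊆ concatSet S' T' := by
  rintro t ⟨u, hu, v, hv, rfl⟩
  exact ⟨u, hS hu, v, hT hv, rfl⟩

theorem condSeqSet_mono (theta : A → L) (r : Set L) {S S' T T' : Set (List A)}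
    (hS : S ⊆ S') (hT : T ⊆ T') :
    condSeqSet theta r S T ⊆ condSeqSet theta r S' T' := by
  rintro t ⟨u, hu, v, hv, hseq⟩
  exact ⟨u, hS hu, v, hT hv, hseq⟩

variable {op : Set (List A) → Set (List A) → Set (List A)}

theorem powOp_mono (hop : ∀ ⦃S S' T T'⦄, S ⊆ S' → T ⊆ T' → op S T ⊆ op S' T')
    {S S' : Set (List A)} (h : S ⊆ S') (n : ℕ) :
    powOp op S n ⊆ powOp op S' n := by
  induction n with
  | zero => exact subset_rfl
  | succ n ih => exact hop h ih

theorem kleene_mono (hop : ∀ ⦃S S' T T'⦄, S ⊆ S' → T ⊆ T' → op S T ⊆ op S' T')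
    {S S' : Set (List A)} (h : S ⊆ S') :
    kleene op S ⊆ kleene op S' :=
  Set.iUnion_mono (powOp_mono hop h)

theorem nil_mem_kleene (S : Set (List A)) : [] ∈ kleene op S :=
  Set.mem_iUnion.2 ⟨0, rfl⟩

end Monotonicity

theorem Prunes.rho_subset {A L : Type} {theta : A → L} {L' : Set L}
    {i i' : Interaction A L} (h : Prunes theta L' i i') :
    rho theta i' ⊆ rho theta i := by
  induction h with
  | empty | act _ => exact subset_rfl
  | alt_both _ _ ih1 ih2 => exact Set.union_subset_union ih1 ih2
  | alt_left _ _ ih => exact ih.trans Set.subset_union_left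
  | alt_right _ _ ih => exact ih.trans Set.subset_union_right
  | strict _ _ ih1 ih2 => exact concatSet_mono ih1 ih2
  | coreg _ _ ih1 ih2 => exact condSeqSet_mono theta _ ih1 ih2
  | loopS _ ih => exact kleene_mono (fun _ _ _ _ => concatSet_mono) ih
  | loopC _ ih => exact kleene_mono (fun _ _ _ _ => condSeqSet_mono theta _) ih
  | loopS_elim _ | loopC_elim _ => exact Set.singleton_subset_iff.2 (nil_mem_kleene _)

/-- Pruning does not introduce new behaviors. -/
theorem prune_no_new_behaviors {A L : Type} (theta : A → L)
    (L' : Set L) (i i' : Interaction A L) (t : List A)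
    (h : Prunes theta L' i i') (ht : t ∈ rho theta i') :
    t ∈ rho theta i :=
  h.rho_subset ht
end

section
/- Pruning removes conflicts: for any set of lifelines L', if i ↝_{L'} i' and t ∈ ρ(i'), then for all l ∈ L', the trace t contains no action occurring on lifeline l. -/
lemma conflict_iff {A L : Type} (theta : A → L) (t : List A) (l : L) :
    conflict theta t l ↔ ∃ a ∈ t, theta a = l := by
  induction t with
  | nil => simp [conflict]
  | cons a t ih => simp [conflict, ih]

lemma condSeq_mem {A L : Type} {theta : A → L} {r : Set L} {u v t : List A}
    (h : CondSeq theta r u v t) : ∀ a ∈ t, a ∈ u ∨ a ∈ v := by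
  induction h with
  | nil_left t2 => intro a ha; exact Or.inr ha
  | nil_right t1 => intro a ha; exact Or.inl ha
  | left _ ih =>
      intro a ha
      rcases List.mem_cons.mp ha with rfl | ha
      · exact Or.inl List.mem_cons_self
      · rcases ih a ha with h | h
        · exact Or.inl (List.mem_cons_of_mem _ h)
        · exact Or.inr h
  | right _ _ ih =>
      intro a ha
      rcases List.mem_cons.mp ha with rfl | ha
      · exact Or.inr List.mem_cons_self
      · rcases ih a ha with h | h
        · exact Or.inl h
        · exact Or.inr (List.mem_cons_of_mem _ h)

lemma kleene_mem {A L : Type} {theta : A → L} {r : Set L}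
    {op : Set (List A) → Set (List A) → Set (List A)}
    (hop : op = concatSet ∨ op = condSeqSet theta r)
    {S : Set (List A)} (hS : ∀ t ∈ S, ∀ a ∈ t, ∃ u ∈ S, a ∈ u)
    {t : List A} (ht : t ∈ kleene op S) : ∀ a ∈ t, ∃ u ∈ S, a ∈ u := by
  obtain ⟨_, ⟨n, rfl⟩, ht⟩ := ht
  induction n generalizing t with
  | zero => intro a ha; simp [powOp] at ht; subst ht; simp at ha
  | succ n ih =>
      rcases hop with rfl | rfl
      · obtain ⟨u, hu, v, hv, rfl⟩ := ht
        intro a ha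
        rcases List.mem_append.mp ha with h | h
        · exact hS u hu a h
        · exact ih hv a h
      · obtain ⟨u, hu, v, hv, hcs⟩ := ht
        intro a ha
        rcases condSeq_mem hcs a ha with h | h
        · exact hS u hu a h
        · exact ih hv a h

lemma prune_mem {A L : Type} (theta : A → L) (L' : Set L) {i i' : Interaction A L}
    (h : Prunes theta L' i i') :
    ∀ t ∈ rho theta i', ∀ a ∈ t, theta a ∉ L' := by
  induction h with
  | empty => intro t ht a ha; simp [rho] at ht; subst ht; simp at ha
  | @act a hna =>
      intro t ht b hb; simp [rho] at ht; subst ht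
      simp at hb; subst hb; exact hna
  | alt_both _ _ ih1 ih2 =>
      intro t ht a ha
      rcases ht with ht | ht
      · exact ih1 t ht a ha
      · exact ih2 t ht a ha
  | alt_left _ _ ih => exact ih
  | alt_right _ _ ih => exact ih
  | strict _ _ ih1 ih2 =>
      rintro t ⟨u, hu, v, hv, rfl⟩ a ha
      rcases List.mem_append.mp ha with h | h
      · exact ih1 u hu a h
      · exact ih2 v hv a h
  | coreg _ _ ih1 ih2 =>
      rintro t ⟨u, hu, v, hv, hcs⟩ a ha
      rcases condSeq_mem hcs a ha with h | h
      · exact ih1 u hu a h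
      · exact ih2 v hv a h
  | @loopS i1 i1' _ ih =>
      intro t ht a ha
      have hS : ∀ u ∈ rho theta i1', ∀ b ∈ u, ∃ w ∈ rho theta i1', b ∈ w :=
        fun u hu b hb => ⟨u, hu, hb⟩
      obtain ⟨u, hu, hau⟩ := kleene_mem (theta := theta) (r := ∅) (Or.inl rfl) hS ht a ha
      exact ih u hu a hau
  | loopS_elim _ => intro t ht a ha; simp [rho] at ht; subst ht; simp at ha
  | @loopC r i1 i1' _ ih =>
      intro t ht a ha
      have hS : ∀ u ∈ rho theta i1', ∀ b ∈ u, ∃ w ∈ rho theta i1', b ∈ w :=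
        fun u hu b hb => ⟨u, hu, hb⟩
      obtain ⟨u, hu, hau⟩ := kleene_mem (theta := theta) (r := r) (Or.inr rfl) hS ht a ha
      exact ih u hu a hau
  | loopC_elim _ => intro t ht a ha; simp [rho] at ht; subst ht; simp at ha

/-- Pruning removes conflicts. -/
theorem prune_removes_conflicts {A L : Type} (theta : A → L)
    (L' : Set L) (i i' : Interaction A L) (t : List A)
    (h : Prunes theta L' i i') (ht : t ∈ rho theta i') :
    ∀ l ∈ L', ¬ conflict theta t l := by
  intro l hl hc
  obtain ⟨a, ha, rfl⟩ := (conflict_iff theta t l).mp hc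
  exact prune_mem theta L' h t ht a ha hl
end
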